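/- arXiv:2205.02868 — 2 statements merged into one kernel-verified Lean document; each statement's English description precedes it below -/
import Mathlib

section
/- Let (X,d) be a complete metric space, let f : X → (−∞,∞] be lower semicontinuous, and let x̄ be a point with f(x̄) finite at which the slope is zero: |∇f|(x̄) = 0. Let M be an identifiable set for f at x̄. Then the quadratic growth rates of f around x̄ with and without restriction to M coincide: liminf_{x → x̄, x ≠ x̄} (f(x) − f(x̄))/d(x,x̄)² = liminf_{x → x̄, x ∈ M, x ≠ x̄} (f(x) − f(x̄))/d(x,x̄)². In particular, f has quadratic growth around x̄ if and only if it has quadratic growth around x̄ relative to M. -/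
/-!
Suppose the growth quotient `(f x - f xbar) / dist x xbar ^ 2` is below `K₀ < K` at points `x`
arbitrarily close to `xbar`. Ekeland's principle, applied on a small ball with a constant `ε`
below the modulus of identifiability, moves such an `x` to a point `y` with `f y ≤ f x` and
slope at most `ε`. Because the slope at `xbar` vanishes, `f ≥ f xbar - o(dist · xbar)` near
`xbar`, and this forces `dist y x ≤ θ * dist x xbar` for any prescribed `θ > 0`. Hence `y → xbar`,
`f y → f xbar`, identifiability puts `y` in `M`, and the quotient at `y` is at most `K`. So the
growth rate relative to `M` is no larger than the unrestricted one; the converse is monotonicity,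
and quadratic growth just says that the rate is positive.
-/

open Filter Topology
open scoped ENNReal NNReal

/-- The slope `|∇f|(x)`: the infimum of all `δ > 0` such that `x` is a local minimizer of
`f + δ·d(·,x)`; it equals `∞` at points where `f x = ⊤`. -/
noncomputable def slopeM {X : Type*} [MetricSpace X] (f : X → EReal) (x : X) : ℝ≥0∞ :=
  if f x = ⊤ then ⊤
  else sInf {δ : ℝ≥0∞ | ∃ c : ℝ, 0 < c ∧ δ = ENNReal.ofReal c ∧
    ∀ᶠ z in 𝓝 x, f x ≤ f z + ((c * dist z x : ℝ) : EReal)}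

/-- The modulus of identifiability: `liminf_{x → xbar, x ∉ M, f(x) → f(xbar)} |∇f|(x)`. -/
noncomputable def identModulus {X : Type*} [MetricSpace X] (f : X → EReal) (M : Set X)
    (xbar : X) : ℝ≥0∞ :=
  Filter.liminf (slopeM f) (𝓝[Mᶜ] xbar ⊓ Filter.comap f (𝓝 (f xbar)))

/-- `M` is an identifiable set for `f` at `xbar`: it is closed, contains `xbar`, and the
modulus of identifiability is strictly positive. -/
def Identifiable {X : Type*} [MetricSpace X] (f : X → EReal) (M : Set X) (xbar : X) : Prop :=
  IsClosed M ∧ xbar ∈ M ∧ 0 < identModulus f M xbar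

section Ekeland

variable {X : Type*} [MetricSpace X]

theorem Set.Nonempty.exists_forall_le_add {α : Type*} {s : Set α} (hs : s.Nonempty)
    {g : α → EReal} {m : ℝ} (hm : ∀ a ∈ s, (m : EReal) ≤ g a) {δ : ℝ} (hδ : 0 < δ) :
    ∃ a ∈ s, ∀ b ∈ s, g a ≤ g b + δ := by
  set I := sInf (g '' s)
  have hI : ∀ b ∈ s, I ≤ g b := fun b hb => sInf_le (Set.mem_image_of_mem g hb)
  rcases eq_or_ne I ⊤ with hItop | hItop
  · obtain ⟨a, ha⟩ := hs
    refine ⟨a, ha, fun b hb => ?_⟩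
    simp [top_le_iff.1 (hItop ▸ hI b hb)]
  · have hIbot : I ≠ ⊥ := ne_bot_of_le_ne_bot (EReal.coe_ne_bot m) (le_sInf (by simpa using hm))
    obtain ⟨i, hi⟩ : ∃ i : ℝ, (i : EReal) = I := ⟨_, EReal.coe_toReal hItop hIbot⟩
    obtain ⟨_, ⟨a, ha, rfl⟩, hlt⟩ := sInf_lt_iff.1 (show I < ↑(i + δ) by
      rw [← hi]; exact_mod_cast lt_add_of_pos_right i hδ)
    refine ⟨a, ha, fun b hb => hlt.le.trans ?_⟩
    rw [EReal.coe_add, hi]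
    exact add_le_add_left (hI b hb) _

def ekelandSet (f : X → EReal) (ε : ℝ) (w : X) : Set X :=
  {v | f v + ↑(ε * dist v w) ≤ f w}

variable {f : X → EReal} {ε : ℝ}

theorem self_mem_ekelandSet (w : X) : w ∈ ekelandSet f ε w := by
  simp [ekelandSet]

theorem le_of_mem_ekelandSet (hε : 0 ≤ ε) {v w : X} (h : v ∈ ekelandSet f ε w) : f v ≤ f w :=
  le_trans (le_add_of_nonneg_right (EReal.coe_nonneg.2 (by positivity))) h

theorem mem_ekelandSet_trans {u v w : X} (huv : u ∈ ekelandSet f ε v)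
    (hvw : v ∈ ekelandSet f ε w) (hε : 0 ≤ ε) : u ∈ ekelandSet f ε w :=
  calc f u + ↑(ε * dist u w)
      ≤ f u + (↑(ε * dist u v) + ↑(ε * dist v w)) := by
        rw [← EReal.coe_add, ← mul_add]
        gcongr
        exact dist_triangle u v w
    _ = f u + ↑(ε * dist u v) + ↑(ε * dist v w) := (add_assoc _ _ _).symm
    _ ≤ f v + ↑(ε * dist v w) := add_le_add_left huv _
    _ ≤ f w := hvw

theorem LowerSemicontinuous.isClosed_ekelandSet (hf : LowerSemicontinuous f) (w : X) :
    IsClosed (ekelandSet f ε w) := by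
  have hg : LowerSemicontinuous fun v => f v + ↑(ε * dist v w) :=
    hf.add' (continuous_coe_real_ereal.comp (continuous_const.mul
      (continuous_id.dist continuous_const))).lowerSemicontinuous
      fun v => EReal.continuousAt_add (Or.inr (EReal.coe_ne_bot _)) (Or.inr (EReal.coe_ne_top _))
  exact hg.isClosed_preimage (f w)

theorem ekelandSet_subset_closedBall (hε : 0 < ε) {m : ℝ} (hm : ∀ z, (m : EReal) ≤ f z)
    {w w' : X} (hw' : w' ∈ ekelandSet f ε w) (hfin : f w' ≠ ⊤) {δ : ℝ}
    (hmin : ∀ v ∈ ekelandSet f ε w, f w' ≤ f v + ↑(ε * δ)) :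
    ekelandSet f ε w' ⊆ Metric.closedBall w' δ := by
  intro v hv
  have hvfin : f v ≠ ⊤ := ne_top_of_le_ne_top hfin (le_of_mem_ekelandSet hε.le hv)
  obtain ⟨b, hb⟩ : ∃ b : ℝ, (b : EReal) = f v :=
    ⟨_, EReal.coe_toReal hvfin (ne_bot_of_le_ne_bot (EReal.coe_ne_bot m) (hm v))⟩
  have hv' := hv.trans (hmin v (mem_ekelandSet_trans hv hw' hε.le))
  rw [← hb, ← EReal.coe_add, ← EReal.coe_add, EReal.coe_le_coe_iff] at hv'
  rw [Metric.mem_closedBall, ← mul_le_mul_iff_right₀ hε]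
  linarith

/-- Ekeland's variational principle. -/
theorem LowerSemicontinuous.exists_le_add_dist [CompleteSpace X] (hf : LowerSemicontinuous f)
    {m : ℝ} (hm : ∀ z, (m : EReal) ≤ f z) (hε : 0 < ε) {x : X} (hx : f x ≠ ⊤) :
    ∃ y, f y + ↑(ε * dist y x) ≤ f x ∧ ∀ z, f y ≤ f z + ↑(ε * dist z y) := by
  let S := ekelandSet f ε
  -- each step nearly minimises `f` over the current set, with tolerance `ε / (n + 1)`
  choose next next_mem next_le using fun (n : ℕ) w =>
    Set.Nonempty.exists_forall_le_add ⟨w, self_mem_ekelandSet w⟩ (s := S w)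
      (fun v _ => hm v) (δ := ε * (1 / (n + 1))) (by positivity)
  let u : ℕ → X := fun n => Nat.rec x next n
  have hanti : Antitone fun n => S (u n) :=
    antitone_nat_of_succ_le fun n _ hv => mem_ekelandSet_trans hv (next_mem n (u n)) hε.le
  have hfin : ∀ n, f (u n) ≠ ⊤ := fun n => by
    induction n with
    | zero => exact hx
    | succ n ih => exact ne_top_of_le_ne_top ih (le_of_mem_ekelandSet hε.le (next_mem n (u n)))
  have hsmall : ∀ n, S (u (n + 1)) ⊆ Metric.closedBall (u (n + 1)) (1 / (n + 1)) := fun n =>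
    ekelandSet_subset_closedBall hε hm (next_mem n (u n)) (hfin (n + 1)) (next_le n (u n))
  have hdiam : ∀ n, Metric.diam (S (u (n + 1))) ≤ 2 * (1 / (n + 1)) := fun n =>
    Metric.diam_le_of_subset_closedBall (by positivity) (hsmall n)
  have hdiam0 : Tendsto (fun n : ℕ => 2 * (1 / ((n : ℝ) + 1))) atTop (𝓝 0) := by
    simpa using tendsto_one_div_add_atTop_nhds_zero_nat.const_mul (2 : ℝ)
  obtain ⟨y, hy⟩ := Metric.nonempty_iInter_of_nonempty_biInter
    (fun n => hf.isClosed_ekelandSet (u (n + 1)))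
    (fun n => Metric.isBounded_closedBall.subset (hsmall n))
    (fun N => ⟨u (N + 1), Set.mem_iInter₂.2 fun n hn =>
      hanti (Nat.succ_le_succ hn) (self_mem_ekelandSet _)⟩)
    (squeeze_zero (fun n => Metric.diam_nonneg) hdiam hdiam0)
  rw [Set.mem_iInter] at hy
  refine ⟨y, hanti (Nat.zero_le 1) (hy 0), fun z => le_of_not_gt fun hz => ?_⟩
  -- `z` would lie in every `S (u n)` too, whose diameters shrink to zero
  have hzS : ∀ n, z ∈ S (u (n + 1)) := fun n => mem_ekelandSet_trans hz.le (hy n) hε.le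
  have hzy : dist z y ≤ 0 := le_of_tendsto_of_tendsto' tendsto_const_nhds hdiam0 fun n =>
    (Metric.dist_le_diam_of_mem (Metric.isBounded_closedBall.subset (hsmall n)) (hzS n)
      (hy n)).trans (hdiam n)
  rw [dist_le_zero.1 hzy, dist_self, mul_zero, EReal.coe_zero, add_zero] at hz
  exact lt_irrefl _ hz

theorem LowerSemicontinuous.exists_le_add_dist_of_isClosed [CompleteSpace X]
    (hf : LowerSemicontinuous f) {s : Set X} (hs : IsClosed s) {m : ℝ}
    (hm : ∀ z ∈ s, (m : EReal) ≤ f z) (hε : 0 < ε) {x : X} (hxs : x ∈ s) (hx : f x ≠ ⊤) :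
    ∃ y ∈ s, f y + ↑(ε * dist y x) ≤ f x ∧ ∀ z ∈ s, f y ≤ f z + ↑(ε * dist z y) := by
  have : CompleteSpace s := hs.completeSpace_coe
  obtain ⟨y, hyx, hy⟩ := (hf.comp continuous_subtype_val).exists_le_add_dist
    (fun z : s => hm z z.2) hε (x := ⟨x, hxs⟩) hx
  exact ⟨y, y.2, hyx, fun z hz => hy ⟨z, hz⟩⟩

end Ekeland

section Slope

variable {X : Type*} [MetricSpace X] {f : X → EReal}

theorem slopeM_le_ofReal {y : X} (hy : f y ≠ ⊤) {ε : ℝ} (hε : 0 < ε)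
    (h : ∀ᶠ z in 𝓝 y, f y ≤ f z + ↑(ε * dist z y)) : slopeM f y ≤ ENNReal.ofReal ε := by
  rw [slopeM, if_neg hy]
  exact sInf_le ⟨ε, hε, rfl, h⟩

theorem eventually_le_add_of_slopeM_eq_zero {x : X} (hx : f x ≠ ⊤) (h0 : slopeM f x = 0)
    {c : ℝ} (hc : 0 < c) : ∀ᶠ z in 𝓝 x, f x ≤ f z + ↑(c * dist z x) := by
  rw [slopeM, if_neg hx] at h0
  obtain ⟨_, ⟨c₀, hc₀, rfl, hev⟩, hlt⟩ := sInf_lt_iff.1 (h0 ▸ ENNReal.ofReal_pos.2 hc)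
  have hc₀c : c₀ ≤ c := ((ENNReal.ofReal_lt_ofReal_iff hc).1 hlt).le
  refine hev.mono fun z hz => hz.trans (add_le_add_right ?_ _)
  exact EReal.coe_le_coe_iff.2 (mul_le_mul_of_nonneg_right hc₀c dist_nonneg)

theorem exists_pos_eventually_mem_of_identModulus_pos {M : Set X} {xbar : X}
    (hM : 0 < identModulus f M xbar) :
    ∃ ε : ℝ, 0 < ε ∧ ∀ᶠ z in 𝓝 xbar ⊓ comap f (𝓝 (f xbar)),
      slopeM f z ≤ ENNReal.ofReal ε → z ∈ M := by
  obtain ⟨ε, hε, hεM⟩ := ENNReal.lt_iff_exists_nnreal_btwn.1 hM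
  have hev := eventually_lt_of_lt_liminf hεM
  rw [nhdsWithin, inf_right_comm, eventually_inf_principal] at hev
  refine ⟨ε, by exact_mod_cast ENNReal.coe_pos.1 hε, hev.mono fun z hz hslope => ?_⟩
  by_contra hzM
  exact (hz hzM).not_ge (by rwa [ENNReal.ofReal_coe_nnreal] at hslope)

end Slope

theorem exists_pos_forall_le_mul_sq {K₀ K : ℝ} (hK : K₀ < K) :
    ∃ θ, 0 < θ ∧ θ < 1 ∧ ∀ d D : ℝ, 0 < d → |D - d| ≤ θ * d → K₀ * d ^ 2 ≤ K * D ^ 2 := by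
  have hcont : Tendsto (fun t : ℝ => K * t ^ 2) (𝓝 1) (𝓝 K) := by
    simpa using ((continuous_pow 2).const_mul K).tendsto (1 : ℝ)
  obtain ⟨ρ, hρ, hball⟩ := Metric.eventually_nhds_iff.1 (hcont.eventually_const_lt hK)
  refine ⟨min (ρ / 2) (1 / 2), by positivity, by linarith [min_le_right (ρ / 2) (1 / 2 : ℝ)],
    fun d D hd hD => ?_⟩
  have ht : dist (D / d) 1 < ρ := by
    rw [Real.dist_eq, ← div_self hd.ne', ← sub_div, abs_div, abs_of_pos hd, div_lt_iff₀ hd]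
    linarith [mul_pos hρ hd, mul_le_mul_of_nonneg_right (min_le_left (ρ / 2) (1 / 2 : ℝ)) hd.le]
  have := (mul_lt_mul_of_pos_right (hball ht) (pow_pos hd 2)).le
  rwa [mul_assoc, ← mul_pow, div_mul_cancel₀ _ hd.ne'] at this

theorem exists_pos_eventually_le_iff_liminf_pos {α : Type*} {l : Filter α} {g : α → EReal} :
    (∃ γ : ℝ, 0 < γ ∧ ∀ᶠ z in l, (γ : EReal) ≤ g z) ↔ 0 < liminf g l := by
  constructor
  · rintro ⟨γ, hγ, hev⟩
    exact (EReal.coe_pos.2 hγ).trans_le (le_liminf_of_le (by isBoundedDefault) hev)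
  · intro h
    obtain ⟨γ, hγ, hγl⟩ := EReal.exists_between_coe_real h
    exact ⟨γ, EReal.coe_pos.1 hγ, (eventually_lt_of_lt_liminf hγl).mono fun z hz => hz.le⟩

section QuadraticGrowth

variable {X : Type*} [MetricSpace X]

/-- `(f z - f xbar) / dist z xbar ^ 2`, whose `liminf`s at `xbar` are the quadratic growth
rates. -/
noncomputable def quadQuot (f : X → EReal) (xbar z : X) : EReal :=
  (f z - f xbar) * (((dist z xbar ^ 2)⁻¹ : ℝ) : EReal)

variable {f : X → EReal} {xbar : X}

theorem quadQuot_le_iff (hfin : f xbar ≠ ⊤) (hbot : f xbar ≠ ⊥) {z : X} (hz : z ≠ xbar) (K : ℝ) :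
    quadQuot f xbar z ≤ K ↔ f z ≤ f xbar + ↑(K * dist z xbar ^ 2) := by
  have hd : (0 : EReal) < ↑(dist z xbar ^ 2) := EReal.coe_pos.2 (by positivity [dist_pos.2 hz])
  rw [quadQuot, EReal.coe_inv, ← div_eq_mul_inv, EReal.div_le_iff_le_mul hd (EReal.coe_ne_top _),
    EReal.sub_le_iff_le_add (Or.inl hbot) (Or.inl hfin), ← EReal.coe_mul, mul_comm, add_comm]

theorem coe_le_quadQuot_iff (hfin : f xbar ≠ ⊤) (hbot : f xbar ≠ ⊥) {z : X} (hz : z ≠ xbar)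
    (γ : ℝ) : (γ : EReal) ≤ quadQuot f xbar z ↔ f xbar + ↑(γ * dist z xbar ^ 2) ≤ f z := by
  have hd : (0 : EReal) < ↑(dist z xbar ^ 2) := EReal.coe_pos.2 (by positivity [dist_pos.2 hz])
  rw [quadQuot, EReal.coe_inv, ← div_eq_mul_inv, EReal.le_div_iff_mul_le hd (EReal.coe_ne_top _),
    EReal.le_sub_iff_add_le (Or.inl hbot) (Or.inl hfin), ← EReal.coe_mul, add_comm]

theorem eventually_growth_iff (hfin : f xbar ≠ ⊤) (hbot : f xbar ≠ ⊥) (s : Set X) (γ : ℝ) :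
    (∀ᶠ z in 𝓝[s] xbar, f xbar + ↑(γ * dist z xbar ^ 2) ≤ f z) ↔
      ∀ᶠ z in 𝓝[s \ {xbar}] xbar, (γ : EReal) ≤ quadQuot f xbar z := by
  rw [Set.sdiff_eq, nhdsWithin_inter', eventually_inf_principal]
  refine eventually_congr (Eventually.of_forall fun z => ?_)
  rcases eq_or_ne z xbar with rfl | hz
  · simp
  · simp [coe_le_quadQuot_iff hfin hbot hz, hz]

end QuadraticGrowth

section ZeroSlope

variable {X : Type*} [MetricSpace X] [CompleteSpace X] {f : X → EReal} {xbar : X}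

theorem exists_nearby_slopeM_le (hf : LowerSemicontinuous f) {a : ℝ} (ha : f xbar = a) {ε θ r K₀ : ℝ}
    (hε : 0 < ε) (hθ : 0 ≤ θ) (hθ1 : θ ≤ 1)
    (hlow : ∀ z, dist z xbar < r → f xbar ≤ f z + ↑(ε * θ / 4 * dist z xbar))
    {x : X} (hxr : dist x xbar < r / 4) (hfx : f x ≤ f xbar + ↑(K₀ * dist x xbar ^ 2))
    (hK₀ : K₀ * dist x xbar ≤ ε * θ / 4) :
    ∃ y, dist y x ≤ θ * dist x xbar ∧ f y ≤ f x ∧ slopeM f y ≤ ENNReal.ofReal ε := by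
  set c := ε * θ / 4 with hc
  have hc0 : 0 ≤ c := by positivity
  have hd0 : 0 ≤ dist x xbar := dist_nonneg
  have hm : ∀ z ∈ Metric.closedBall xbar (r / 2), ((a - c * r : ℝ) : EReal) ≤ f z := by
    intro z hz
    have hzr : dist z xbar < r := (Metric.mem_closedBall.1 hz).trans_lt (by linarith)
    calc ((a - c * r : ℝ) : EReal) ≤ ↑a - ↑(c * dist z xbar) := by
          rw [← EReal.coe_sub]; gcongr
      _ ≤ f z := (EReal.sub_le_iff_le_add (Or.inl (EReal.coe_ne_bot _))
          (Or.inl (EReal.coe_ne_top _))).2 (ha ▸ hlow z hzr)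
  obtain ⟨fx, hfx_eq⟩ : ∃ b : ℝ, (b : EReal) = f x := by
    refine ⟨_, EReal.coe_toReal (ne_top_of_le_ne_top ?_ hfx) ?_⟩
    · rw [ha, ← EReal.coe_add]; exact EReal.coe_ne_top _
    · exact ne_bot_of_le_ne_bot (EReal.coe_ne_bot _) (hm x (Metric.mem_closedBall.2 (by linarith)))
  obtain ⟨y, hyB, hyx, hymin⟩ := hf.exists_le_add_dist_of_isClosed Metric.isClosed_closedBall hm hε
    (Metric.mem_closedBall.2 (by linarith)) (hfx_eq ▸ EReal.coe_ne_top fx)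
  have hyr : dist y xbar < r := (Metric.mem_closedBall.1 hyB).trans_lt (by linarith)
  have hyx_le : f y ≤ f x := le_of_mem_ekelandSet hε.le hyx
  obtain ⟨fy, hfy_eq⟩ : ∃ b : ℝ, (b : EReal) = f y :=
    ⟨_, EReal.coe_toReal (ne_top_of_le_ne_top (hfx_eq ▸ EReal.coe_ne_top fx) hyx_le)
      (ne_bot_of_le_ne_bot (EReal.coe_ne_bot _) (hm y hyB))⟩
  have hdescent : fy + ε * dist y x ≤ fx := by
    rw [← hfx_eq, ← hfy_eq] at hyx; exact_mod_cast hyx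
  have hgrowth : fx ≤ a + K₀ * dist x xbar ^ 2 := by
    rw [← hfx_eq, ha] at hfx; exact_mod_cast hfx
  have hslope : a ≤ fy + c * dist y xbar := by
    have := hlow y hyr; rw [← hfy_eq, ha] at this; exact_mod_cast this
  have htri := dist_triangle y x xbar
  -- with `e = dist y x`, `d = dist x xbar`: `ε e ≤ c (e + 2 d)` and `c ≤ ε / 4`,
  -- so `e ≤ (2 / 3) θ d`
  have hdisp : dist y x ≤ θ * dist x xbar := by
    have hK₀d : K₀ * dist x xbar ^ 2 ≤ c * dist x xbar := by
      nlinarith [mul_le_mul_of_nonneg_right hK₀ hd0]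
    have hθe : c * dist y x ≤ ε / 4 * dist y x :=
      mul_le_mul_of_nonneg_right (by rw [hc]; nlinarith) dist_nonneg
    have : ε * (3 / 4 * dist y x) ≤ ε * (θ / 2 * dist x xbar) := by
      nlinarith [mul_le_mul_of_nonneg_left htri hc0]
    nlinarith [le_of_mul_le_mul_left this hε, mul_nonneg hθ hd0]
  refine ⟨y, hdisp, hyx_le, slopeM_le_ofReal (hfy_eq ▸ EReal.coe_ne_top fy) hε ?_⟩
  have hyball : y ∈ Metric.ball xbar (r / 2) := by
    rw [Metric.mem_ball]; nlinarith
  exact Filter.eventually_of_mem (Metric.isOpen_ball.mem_nhds hyball)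
    fun z hz => hymin z (Metric.ball_subset_closedBall hz)

theorem exists_tendsto_nearby_slopeM_le (hf : LowerSemicontinuous f) (hfin : f xbar ≠ ⊤)
    (hbot : f xbar ≠ ⊥) (hslope : slopeM f xbar = 0) {ε θ K₀ : ℝ} (hε : 0 < ε) (hθ : 0 < θ)
    (hθ1 : θ ≤ 1) {l : Filter X} (hl : l ≤ 𝓝 xbar)
    (hgrowth : ∀ᶠ x in l, f x ≤ f xbar + ↑(K₀ * dist x xbar ^ 2)) :
    ∃ y : X → X, Tendsto y l (𝓝 xbar ⊓ comap f (𝓝 (f xbar))) ∧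
      ∀ᶠ x in l, |dist (y x) xbar - dist x xbar| ≤ θ * dist x xbar ∧ f (y x) ≤ f x ∧
        slopeM f (y x) ≤ ENNReal.ofReal ε := by
  obtain ⟨a, ha⟩ : ∃ a : ℝ, f xbar = a := ⟨_, (EReal.coe_toReal hfin hbot).symm⟩
  obtain ⟨r, hr, hlow⟩ := Metric.eventually_nhds_iff.1
    (eventually_le_add_of_slopeM_eq_zero hfin hslope (c := ε * θ / 4) (by positivity))
  have hd : Tendsto (fun x => dist x xbar) l (𝓝 0) :=
    (tendsto_iff_dist_tendsto_zero.1 tendsto_id).mono_left hl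
  have hgood : ∀ᶠ x in l, dist x xbar < r / 4 ∧ K₀ * dist x xbar ≤ ε * θ / 4 ∧
      f x ≤ f xbar + ↑(K₀ * dist x xbar ^ 2) :=
    (hd.eventually_lt_const (by positivity)).and (((hd.const_mul K₀).eventually_le_const
      (u := ε * θ / 4) (by simpa using by positivity)).and hgrowth)
  choose! y hyx hyf hyslope using fun x (hx : dist x xbar < r / 4 ∧
      K₀ * dist x xbar ≤ ε * θ / 4 ∧ f x ≤ f xbar + ↑(K₀ * dist x xbar ^ 2)) =>
    exists_nearby_slopeM_le hf ha hε hθ.le hθ1 (fun z hz => hlow hz) hx.1 hx.2.2 hx.2.1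
  have hD : ∀ᶠ x in l, |dist (y x) xbar - dist x xbar| ≤ θ * dist x xbar :=
    hgood.mono fun x hx => (abs_dist_sub_le _ _ _).trans (hyx x hx)
  have hy : Tendsto y l (𝓝 xbar) := by
    refine tendsto_iff_dist_tendsto_zero.2 (squeeze_zero' (Eventually.of_forall
      fun _ => dist_nonneg) ?_ (by simpa using hd.const_mul (1 + θ)))
    filter_upwards [hD] with x hx
    linarith [(abs_le.1 hx).2]
  have hfy : Tendsto (fun x => f (y x)) l (𝓝 (f xbar)) := by
    have hlower : Tendsto (fun x => ((a - ε * θ / 4 * dist (y x) xbar : ℝ) : EReal)) l (𝓝 a) :=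
      EReal.tendsto_coe.2 (by simpa using
        tendsto_const_nhds.sub ((tendsto_iff_dist_tendsto_zero.1 hy).const_mul (ε * θ / 4)))
    have hupper : Tendsto (fun x => ((a + K₀ * dist x xbar ^ 2 : ℝ) : EReal)) l (𝓝 a) :=
      EReal.tendsto_coe.2 (by simpa using tendsto_const_nhds.add ((hd.pow 2).const_mul K₀))
    rw [ha]
    refine tendsto_of_tendsto_of_tendsto_of_le_of_le' hlower hupper ?_ ?_
    · filter_upwards [hgood, hD] with x hx hxD
      have hyr : dist (y x) xbar < r := by
        nlinarith [(abs_le.1 hxD).2,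
          mul_le_mul_of_nonneg_right hθ1 (dist_nonneg (x := x) (y := xbar))]
      rw [EReal.coe_sub, EReal.sub_le_iff_le_add (Or.inl (EReal.coe_ne_bot _))
        (Or.inl (EReal.coe_ne_top _)), ← ha]
      exact hlow hyr
    · filter_upwards [hgood] with x hx
      rw [EReal.coe_add, ← ha]
      exact (hyf x hx).trans hx.2.2
  refine ⟨y, tendsto_inf.2 ⟨hy, tendsto_comap_iff.2 hfy⟩, ?_⟩
  filter_upwards [hgood, hD] with x hx hxD
  exact ⟨hxD, hyf x hx, hyslope x hx⟩

theorem frequently_le_add_sq_of_identModulus_pos (hf : LowerSemicontinuous f)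
    (hfin : f xbar ≠ ⊤) (hbot : f xbar ≠ ⊥) (hslope : slopeM f xbar = 0) {M : Set X}
    (hM : 0 < identModulus f M xbar) {K₀ K : ℝ} (hK : K₀ < K)
    (h : ∃ᶠ z in 𝓝[≠] xbar, f z ≤ f xbar + ↑(K₀ * dist z xbar ^ 2)) :
    ∃ᶠ z in 𝓝[M \ {xbar}] xbar, f z ≤ f xbar + ↑(K * dist z xbar ^ 2) := by
  obtain ⟨θ, hθ, hθ1, hθK⟩ := exists_pos_forall_le_mul_sq hK
  obtain ⟨ε, hε, hεM⟩ := exists_pos_eventually_mem_of_identModulus_pos hM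
  set l := 𝓝[≠] xbar ⊓ 𝓟 {z | f z ≤ f xbar + ↑(K₀ * dist z xbar ^ 2)}
  have : l.NeBot := frequently_iff_neBot.1 h
  have hne : ∀ᶠ x in l, x ≠ xbar := mem_inf_of_left self_mem_nhdsWithin
  have hgrowth : ∀ᶠ x in l, f x ≤ f xbar + ↑(K₀ * dist x xbar ^ 2) :=
    mem_inf_of_right (mem_principal_self _)
  obtain ⟨y, hy, hyl⟩ := exists_tendsto_nearby_slopeM_le hf hfin hbot hslope hε hθ hθ1.le
    (inf_le_left.trans nhdsWithin_le_nhds) hgrowth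
  have hyM : ∀ᶠ x in l, y x ∈ M \ {xbar} := by
    filter_upwards [hy.eventually hεM, hyl, hne] with x hxM hxy hx
    refine ⟨hxM hxy.2.2, fun hyx => ?_⟩
    have hxD := hxy.1
    rw [hyx, dist_self, zero_sub, abs_neg, abs_of_nonneg dist_nonneg] at hxD
    nlinarith [dist_pos.2 hx]
  have hyK : ∀ᶠ x in l, f (y x) ≤ f xbar + ↑(K * dist (y x) xbar ^ 2) := by
    filter_upwards [hyl, hne, hgrowth] with x hxy hx hxg
    refine hxy.2.1.trans (hxg.trans (add_le_add_right ?_ _))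
    exact EReal.coe_le_coe_iff.2 (hθK _ _ (dist_pos.2 hx) hxy.1)
  exact (tendsto_nhdsWithin_iff.2 ⟨hy.mono_right inf_le_left, hyM⟩).frequently hyK.frequently

theorem liminf_quadQuot_eq (hf : LowerSemicontinuous f) (hfin : f xbar ≠ ⊤) (hbot : f xbar ≠ ⊥)
    (hslope : slopeM f xbar = 0) {M : Set X} (hM : 0 < identModulus f M xbar) :
    liminf (quadQuot f xbar) (𝓝[≠] xbar) = liminf (quadQuot f xbar) (𝓝[M \ {xbar}] xbar) := by
  refine le_antisymm (liminf_le_liminf_of_le (nhdsWithin_mono _ fun z hz => hz.2))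
    (EReal.le_of_forall_lt_iff_le.1 fun K hK => ?_)
  obtain ⟨K₀, hK₀, hK₀K⟩ := EReal.exists_between_coe_real hK
  have hfreq : ∃ᶠ z in 𝓝[≠] xbar, f z ≤ f xbar + ↑(K₀ * dist z xbar ^ 2) :=
    ((frequently_lt_of_liminf_lt (by isBoundedDefault) hK₀).and_eventually
      self_mem_nhdsWithin).mono fun z hz => (quadQuot_le_iff hfin hbot hz.2 K₀).1 hz.1.le
  refine liminf_le_of_frequently_le ?_ (by isBoundedDefault)
  exact ((frequently_le_add_sq_of_identModulus_pos hf hfin hbot hslope hM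
    (EReal.coe_lt_coe_iff.1 hK₀K) hfreq).and_eventually self_mem_nhdsWithin).mono
    fun z hz => (quadQuot_le_iff hfin hbot hz.2.2 K).2 hz.1

end ZeroSlope

/-- Quadratic growth: the quadratic growth rates of `f` around `xbar`, with and without
restriction to an identifiable set `M`, coincide; in particular `f` has quadratic growth
around `xbar` if and only if it has quadratic growth around `xbar` relative to `M`. -/
theorem quadratic_growth_identifiable {X : Type*} [MetricSpace X] [CompleteSpace X]
    (f : X → EReal) (hlsc : LowerSemicontinuous f) (hbot : ∀ z, f z ≠ ⊥)
    (xbar : X) (hfin : f xbar ≠ ⊤) (hslope : slopeM f xbar = 0)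
    (M : Set X) (hM : Identifiable f M xbar) :
    (Filter.liminf (fun z => (f z - f xbar) * (((dist z xbar ^ 2)⁻¹ : ℝ) : EReal))
        (𝓝[≠] xbar)
      = Filter.liminf (fun z => (f z - f xbar) * (((dist z xbar ^ 2)⁻¹ : ℝ) : EReal))
        (𝓝[M \ {xbar}] xbar)) ∧
    ((∃ γ : ℝ, 0 < γ ∧ ∀ᶠ z in 𝓝 xbar, f xbar + ((γ * dist z xbar ^ 2 : ℝ) : EReal) ≤ f z) ↔
      (∃ γ : ℝ, 0 < γ ∧ ∀ᶠ z in 𝓝[M] xbar, f xbar + ((γ * dist z xbar ^ 2 : ℝ) : EReal) ≤ f z)) := by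
  have hrate := liminf_quadQuot_eq hlsc hfin (hbot xbar) hslope hM.2.2
  refine ⟨hrate, ?_⟩
  rw [← nhdsWithin_univ]
  simp only [eventually_growth_iff hfin (hbot xbar), ← Set.compl_eq_univ_sdiff,
    exists_pos_eventually_le_iff_liminf_pos, hrate]
end

section
/- Let (X,d) be a complete metric space and let f : X → (−∞,∞] be proper, lower semicontinuous, and bounded below, with ρ̄ = inf f. Assume f is continuous on slope-bounded sets: whenever x_k → x with the values f(x_k) and the slopes |∇f|(x_k) uniformly bounded, one has f(x_k) → f(x). Assume the global KL property: there exist ρ > inf f and a desingularizer φ such that every x with inf f < f(x) < ρ satisfies |∇(φ ∘ (f − inf f))|(x) ≥ 1. Let α > 0 and let (x_k) be a proximal sequence, meaning x_{k+1} minimizes f + α·d(·,x_k)² over X for every k, with f(x₀) < ρ and f(x_k) > inf f for all k. Then the trajectory has finite length, Σ_k d(x_k, x_{k+1}) < ∞, the iterates x_k converge to some point x*, f(x_k) → f(x*), and |∇f|(x_k) → 0; in particular x* is a critical point of f. -/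
open Filter Topology
open scoped ENNReal NNReal

/-- A desingularizer `φ : [0,∞] → [0,∞]`, modelled by its restriction `toFun` to `[0,∞)`
together with its value `topVal` at `+∞`:  `φ(0) = 0`, `φ` is continuous on `[0,∞)`,
`φ(τ) → φ(+∞)` as `τ → +∞`, and `φ` has a continuous strictly positive derivative
on `(0,∞)`. -/
structure Desingularizer where
  toFun : ℝ → ℝ
  topVal : EReal
  nonneg : ∀ τ : ℝ, 0 ≤ τ → 0 ≤ toFun τ
  topVal_nonneg : (0 : EReal) ≤ topVal
  map_zero : toFun 0 = 0
  contOn : ContinuousOn toFun (Set.Ici 0)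
  diffAt : ∀ τ : ℝ, 0 < τ → DifferentiableAt ℝ toFun τ
  deriv_pos : ∀ τ : ℝ, 0 < τ → 0 < deriv toFun τ
  deriv_contOn : ContinuousOn (deriv toFun) (Set.Ioi 0)
  tendsto_topVal : Filter.Tendsto (fun τ : ℝ => ((toFun τ : ℝ) : EReal)) Filter.atTop (nhds topVal)

/-- The composite function `φ ∘ max{f − v, 0}`. -/
noncomputable def klComp {X : Type*} (φ : Desingularizer) (f : X → EReal) (v : EReal)
    (x : X) : EReal :=
  if f x = ⊤ then φ.topVal else ((φ.toFun (max ((f x - v).toReal) 0) : ℝ) : EReal)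

/-- `f` has the KL property at `xbar` with desingularizer `φ`: the level set
`{x : f(x) ≤ f(xbar)}` is identifiable at `xbar` for the composite `φ ∘ f_{xbar}`. -/
def KLProperty {X : Type*} [MetricSpace X] (f : X → EReal) (xbar : X) (φ : Desingularizer) : Prop :=
  Identifiable (klComp φ f (f xbar)) {x | f x ≤ f xbar} xbar

/-!
Ekeland's variational principle, applied to the composite `φ ∘ (f - inf f)` truncated to a band
of levels `[a, f x]`, turns the KL inequality `|∇(φ ∘ (f - inf f))| ≥ 1` into the error bound
`dist (x, [f ≤ a]) ≤ φ (f x - inf f) - φ (a - inf f)`. No point of `[f ≤ f x_{k+1}]` is closer to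
`x_k` than the proximal point `x_{k+1}`, so `d(x_k, x_{k+1})` is bounded by the decrease of
`φ (f x_k - inf f)`, and these decreases telescope: the trajectory has finite length. Optimality
of the proximal step gives `|∇f|(x_{k+1}) ≤ 2α d(x_k, x_{k+1}) → 0`, and continuity of `f` on
slope-bounded sets then gives `f x_k → f x*`.
-/

open Metric

namespace EReal

-- Clamping into `[a, b]` before `toReal` avoids its junk values at `±∞`, so the result is
-- monotone and continuous.
noncomputable def clampToReal (a b : ℝ) (t : EReal) : ℝ :=
  (max (a : EReal) (min (b : EReal) t)).toReal

variable (a b : ℝ)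

lemma clampToReal_coe (c : ℝ) : clampToReal a b c = max a (min b c) := by
  rw [clampToReal, ← coe_strictMono.monotone.map_min, ← coe_strictMono.monotone.map_max,
    toReal_coe]

lemma clampToReal_bot : clampToReal a b ⊥ = a := by
  simp [clampToReal]

lemma clampToReal_of_le {a b : ℝ} (hab : a ≤ b) {t : EReal} (ht : (b : EReal) ≤ t) :
    clampToReal a b t = b := by
  simp [clampToReal, min_eq_left ht, hab]

lemma max_min_ne_bot (t : EReal) : max (a : EReal) (min (b : EReal) t) ≠ ⊥ :=
  ne_bot_of_le_ne_bot (coe_ne_bot a) (le_max_left _ _)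

lemma max_min_ne_top (t : EReal) : max (a : EReal) (min (b : EReal) t) ≠ ⊤ :=
  ne_top_of_le_ne_top (coe_ne_top (max a b)) (by simp)

lemma monotone_clampToReal : Monotone (clampToReal a b) := fun s t hst =>
  toReal_le_toReal (max_le_max_left _ (min_le_min_left _ hst)) (max_min_ne_bot a b s)
    (max_min_ne_top a b t)

lemma continuous_clampToReal : Continuous (clampToReal a b) :=
  continuousOn_toReal.comp_continuous (continuous_const.max (continuous_const.min continuous_id))
    fun t => by simp

lemma le_add_coe_sub_of_add_coe_le {p q : EReal} {A B : ℝ} (h : p + A ≤ q + B) :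
    p ≤ q + ((B - A : ℝ) : EReal) := by
  induction q using EReal.rec with
  | bot => simp_all
  | top => rw [top_add_coe]; exact le_top
  | coe b =>
    induction p using EReal.rec with
    | bot => exact bot_le
    | top => simp [← coe_add] at h
    | coe a => norm_cast at h ⊢; linarith

end EReal

namespace Desingularizer

variable (φ : Desingularizer)

lemma strictMonoOn : StrictMonoOn φ.toFun (Set.Ici 0) := by
  refine strictMonoOn_of_deriv_pos (convex_Ici 0) φ.contOn fun τ hτ => φ.deriv_pos τ ?_
  rwa [interior_Ici] at hτ

lemma monotone_max_zero : Monotone fun τ => φ.toFun (max τ 0) := fun _ _ h =>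
  φ.strictMonoOn.monotoneOn (Set.mem_Ici.2 (le_max_right _ _)) (Set.mem_Ici.2 (le_max_right _ _))
    (max_le_max_right 0 h)

lemma continuous_max_zero : Continuous fun τ => φ.toFun (max τ 0) :=
  φ.contOn.comp_continuous (continuous_id.max continuous_const) fun τ => le_max_right τ 0

lemma coe_le_topVal {τ : ℝ} (hτ : 0 ≤ τ) : ((φ.toFun τ : ℝ) : EReal) ≤ φ.topVal :=
  ge_of_tendsto φ.tendsto_topVal <| (eventually_ge_atTop τ).mono fun _ hσ =>
    EReal.coe_le_coe_iff.2 (φ.strictMonoOn.monotoneOn hτ (hτ.trans hσ) hσ)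

end Desingularizer

lemma klComp_of_eq_coe (φ : Desingularizer) {X : Type*} {f : X → EReal} {v c : ℝ} {z : X}
    (hz : f z = c) : klComp φ f v z = φ.toFun (max (c - v) 0) := by
  simp [klComp, hz, ← EReal.coe_sub]

lemma slopeM_le_ofReal_s13 {X : Type*} [MetricSpace X] {F : X → EReal} {x : X} (hx : F x ≠ ⊤)
    {c : ℝ} (hc : 0 < c) (h : ∀ᶠ z in 𝓝 x, F x ≤ F z + ((c * dist z x : ℝ) : EReal)) :
    slopeM F x ≤ ENNReal.ofReal c := by
  rw [slopeM, if_neg hx]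
  exact sInf_le ⟨c, hc, rfl, h⟩

lemma exists_mem_forall_le_add {Y : Type*} {G : Y → ℝ} {s : Set Y} (hs : s.Nonempty)
    (hbdd : BddBelow (G '' s)) {ε : ℝ} (hε : 0 < ε) :
    ∃ w ∈ s, ∀ z ∈ s, G w ≤ G z + ε := by
  obtain ⟨_, ⟨w, hw, rfl⟩, hlt⟩ :=
    exists_lt_of_csInf_lt (hs.image G) (lt_add_of_pos_right (sInf (G '' s)) hε)
  exact ⟨w, hw, fun z hz => hlt.le.trans (by gcongr; exact csInf_le hbdd ⟨z, hz, rfl⟩)⟩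

theorem ekeland_variational_principle {Y : Type*} [MetricSpace Y] [CompleteSpace Y]
    {G : Y → ℝ} (hG : LowerSemicontinuous G) {m : ℝ} (hm : ∀ z, m ≤ G z) {lam : ℝ}
    (hlam : 0 < lam) (x₀ : Y) :
    ∃ y, lam * dist x₀ y ≤ G x₀ - G y ∧ ∀ z, G y ≤ G z + lam * dist z y := by
  set S : Y → Set Y := fun w => {z | G z + lam * dist z w ≤ G w}
  have mem_self : ∀ w, w ∈ S w := fun w => by simp [S]
  have mem_trans : ∀ {u w z}, z ∈ S w → w ∈ S u → z ∈ S u := by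
    intro u w z (hz : G z + lam * dist z w ≤ G w) (hw : G w + lam * dist w u ≤ G u)
    show G z + lam * dist z u ≤ G u
    nlinarith [dist_triangle z w u]
  have closed : ∀ w, IsClosed (S w) := fun w =>
    (hG.add (continuous_const.mul (continuous_id.dist continuous_const)).lowerSemicontinuous)
      |>.isClosed_preimage (G w)
  choose next next_mem next_le using fun w (n : ℕ) =>
    exists_mem_forall_le_add ⟨w, mem_self w⟩ ⟨m, by rintro _ ⟨z, -, rfl⟩; exact hm z⟩
      (Nat.one_div_pos_of_nat (n := n))
  let y : ℕ → Y := fun n => Nat.rec x₀ (fun n w => next w n) n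
  have small : ∀ n, S (y (n + 1)) ⊆ closedBall (y (n + 1)) (1 / (n + 1) / lam) := by
    intro n z (hz : G z + lam * dist z (y (n + 1)) ≤ G (y (n + 1)))
    have h := next_le (y n) n z (mem_trans hz (next_mem _ _))
    rw [mem_closedBall, le_div_iff₀ hlam]
    linarith
  have bounded : ∀ n, Bornology.IsBounded (S (y (n + 1))) := fun n =>
    isBounded_closedBall.subset (small n)
  have diam_tendsto : Tendsto (fun n => diam (S (y (n + 1)))) atTop (𝓝 0) := by
    have h : Tendsto (fun n : ℕ => 2 * (1 / ((n : ℝ) + 1) / lam)) atTop (𝓝 0) := by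
      simpa using (tendsto_one_div_add_atTop_nhds_zero_nat.div_const lam).const_mul 2
    exact squeeze_zero (fun n => diam_nonneg)
      (fun n => diam_le_of_subset_closedBall (by positivity) (small n)) h
  have anti : Antitone fun n => S (y (n + 1)) :=
    antitone_nat_of_succ_le fun n z hz => mem_trans hz (next_mem _ _)
  obtain ⟨ys, hys⟩ := nonempty_iInter_of_nonempty_biInter (fun n => closed _) bounded
    (fun N => ⟨y (N + 1), Set.mem_iInter₂.2 fun n hn => anti hn (mem_self _)⟩) diam_tendsto
  have hys' : ∀ n, ys ∈ S (y (n + 1)) := Set.mem_iInter.1 hys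
  refine ⟨ys, ?_, fun z => ?_⟩
  · have h : G ys + lam * dist ys x₀ ≤ G x₀ := mem_trans (hys' 0) (next_mem x₀ 0)
    rw [dist_comm]
    linarith
  · by_contra! hz
    have hzS : ∀ n, z ∈ S (y (n + 1)) := fun n => mem_trans hz.le (hys' n)
    have hdist : dist z ys ≤ 0 := ge_of_tendsto' diam_tendsto fun n =>
      dist_le_diam_of_mem (bounded n) (hzS n) (hys' n)
    rw [dist_le_zero.1 hdist, dist_self, mul_zero, add_zero] at hz
    exact hz.false

namespace Desingularizer

variable (φ : Desingularizer) (v a b : ℝ)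

noncomputable def truncComp (t : EReal) : ℝ :=
  φ.toFun (max (EReal.clampToReal a b t - v) 0)

lemma monotone_truncComp : Monotone (φ.truncComp v a b) := fun _ _ hst =>
  φ.monotone_max_zero (by linarith [EReal.monotone_clampToReal a b hst])

lemma continuous_truncComp : Continuous (φ.truncComp v a b) :=
  φ.continuous_max_zero.comp ((EReal.continuous_clampToReal a b).sub continuous_const)

variable {v a b}

lemma truncComp_coe {c : ℝ} (hvc : v ≤ c) (hac : a ≤ c) (hcb : c ≤ b) :
    φ.truncComp v a b c = φ.toFun (c - v) := by
  rw [truncComp, EReal.clampToReal_coe, min_eq_right hcb, max_eq_right hac,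
    max_eq_left (sub_nonneg.2 hvc)]

lemma truncComp_bot (hva : v ≤ a) : φ.truncComp v a b ⊥ = φ.toFun (a - v) := by
  rw [truncComp, EReal.clampToReal_bot, max_eq_left (sub_nonneg.2 hva)]

lemma truncComp_of_le (hva : v ≤ a) (hab : a ≤ b) {t : EReal} (ht : (b : EReal) ≤ t) :
    φ.truncComp v a b t = φ.toFun (b - v) := by
  rw [truncComp, EReal.clampToReal_of_le hab ht, max_eq_left (sub_nonneg.2 (hva.trans hab))]

lemma truncComp_le_klComp {X : Type*} {f : X → EReal} {z : X} (hz : (a : EReal) < f z) :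
    (φ.truncComp v a b (f z) : EReal) ≤ klComp φ f v z := by
  induction hfz : f z using EReal.rec with
  | bot => simp [hfz] at hz
  | top => rw [klComp, if_pos hfz]; exact φ.coe_le_topVal (le_max_right _ _)
  | coe c =>
    rw [hfz, EReal.coe_lt_coe_iff] at hz
    rw [klComp_of_eq_coe φ hfz, truncComp, EReal.clampToReal_coe, EReal.coe_le_coe_iff]
    exact φ.monotone_max_zero (by linarith [min_le_right b c, max_le hz.le (min_le_right b c)])

end Desingularizer

section KL

variable {X : Type*} [MetricSpace X] {f : X → EReal} {φ : Desingularizer} {v : ℝ}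

lemma slopeM_klComp_le_of_forall_truncComp_le (hlsc : LowerSemicontinuous f) {a b lam : ℝ}
    (hlam : 0 < lam) (hva : v < a) {y : X} (hya : (a : EReal) < f y) (hyb : f y ≤ b)
    (hy : ∀ z, φ.truncComp v a b (f y) ≤ φ.truncComp v a b (f z) + lam * dist z y) :
    slopeM (klComp φ f v) y ≤ ENNReal.ofReal lam := by
  obtain ⟨c, hc⟩ : ∃ c : ℝ, f y = c :=
    ⟨(f y).toReal, (EReal.coe_toReal (ne_top_of_le_ne_top (EReal.coe_ne_top b) hyb)
      (ne_bot_of_gt hya)).symm⟩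
  have hyc : klComp φ f v y = φ.truncComp v a b (f y) := by
    rw [hc, EReal.coe_lt_coe_iff] at hya
    rw [hc, EReal.coe_le_coe_iff] at hyb
    rw [klComp_of_eq_coe φ hc, hc, φ.truncComp_coe (by linarith) hya.le hyb,
      max_eq_left (by linarith)]
  refine slopeM_le_ofReal_s13 (by simp [hyc]) hlam ?_
  filter_upwards [hlsc y a hya] with z hz
  rw [hyc]
  calc (φ.truncComp v a b (f y) : EReal)
      ≤ ((φ.truncComp v a b (f z) + lam * dist z y : ℝ) : EReal) :=
        EReal.coe_le_coe_iff.2 (hy z)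
    _ ≤ klComp φ f v z + ((lam * dist z y : ℝ) : EReal) := by
        rw [EReal.coe_add]
        gcongr
        exact φ.truncComp_le_klComp hz

variable [CompleteSpace X] {ρ : EReal}

theorem exists_sublevel_mul_dist_le_of_KL (hlsc : LowerSemicontinuous f)
    (hKL : ∀ z, (v : EReal) < f z → f z < ρ → 1 ≤ slopeM (klComp φ f v) z)
    {x : X} {a b : ℝ} (hxb : f x = b) (hxρ : f x < ρ) (hva : v < a) (hab : a < b)
    {lam : ℝ} (hlam0 : 0 < lam) (hlam1 : lam < 1) :
    ∃ y, f y ≤ a ∧ lam * dist x y ≤ φ.toFun (b - v) - φ.toFun (a - v) := by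
  have hmono := φ.monotone_truncComp v a b
  obtain ⟨y, hy_start, hy_min⟩ := ekeland_variational_principle (G := φ.truncComp v a b ∘ f)
    ((φ.continuous_truncComp v a b).comp_lowerSemicontinuous hlsc hmono)
    (fun z => hmono bot_le) hlam0 x
  simp only [Function.comp_apply, hxb, φ.truncComp_of_le hva.le hab.le le_rfl] at hy_start hy_min
  by_cases hya : f y ≤ a
  · exact ⟨y, hya, by linarith [φ.truncComp_bot hva.le ▸ hmono (bot_le : ⊥ ≤ f y)]⟩
  -- otherwise `y` lies in the KL region, where `klComp` would have slope at most `lam < 1`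
  push Not at hya
  -- above level `b` the truncation is flat, so there Ekeland's inequality forces `y = x`
  have hyb : f y ≤ b := by
    by_contra! hby
    have hxy : x = y := dist_le_zero.1 <| by
      nlinarith [φ.truncComp_of_le hva.le hab.le hby.le, dist_nonneg (x := x) (y := y)]
    exact hby.ne (hxy ▸ hxb).symm
  have hslope := slopeM_klComp_le_of_forall_truncComp_le hlsc hlam0 hva hya hyb hy_min
  have hKLy := hKL y ((EReal.coe_lt_coe_iff.2 hva).trans hya) (hyb.trans_lt (hxb ▸ hxρ))
  exact absurd (hKLy.trans hslope) (not_le.2 (ENNReal.ofReal_lt_one.2 hlam1))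

theorem infDist_sublevel_le_of_KL (hlsc : LowerSemicontinuous f)
    (hKL : ∀ z, (v : EReal) < f z → f z < ρ → 1 ≤ slopeM (klComp φ f v) z)
    {x : X} {a b : ℝ} (hxb : f x = b) (hxρ : f x < ρ) (hva : v < a) (hab : a ≤ b) :
    infDist x {y | f y ≤ a} ≤ φ.toFun (b - v) - φ.toFun (a - v) := by
  rcases hab.eq_or_lt with rfl | hab
  · rw [infDist_zero_of_mem (show x ∈ {y | f y ≤ (a : EReal)} from hxb.le), sub_self]
  have hlam : ∀ᶠ lam in 𝓝[<] (1 : ℝ), lam * infDist x {y | f y ≤ a} ≤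
      φ.toFun (b - v) - φ.toFun (a - v) := by
    filter_upwards [Ioo_mem_nhdsLT zero_lt_one] with lam ⟨hlam0, hlam1⟩
    obtain ⟨y, hya, hy⟩ :=
      exists_sublevel_mul_dist_le_of_KL hlsc hKL hxb hxρ hva hab hlam0 hlam1
    have hdist : infDist x {y | f y ≤ a} ≤ dist x y := infDist_le_dist_of_mem (by exact hya)
    exact (mul_le_mul_of_nonneg_left hdist hlam0.le).trans hy
  refine le_of_tendsto ?_ hlam
  exact ((continuous_mul_const _).tendsto' 1 _ (one_mul _)).mono_left nhdsWithin_le_nhds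

end KL

section Proximal

variable {X : Type*} [MetricSpace X]

def IsProxPoint (f : X → EReal) (α : ℝ) (x x' : X) : Prop :=
  ∀ z, f x' + ((α * dist x' x ^ 2 : ℝ) : EReal) ≤ f z + ((α * dist z x ^ 2 : ℝ) : EReal)

variable {f : X → EReal} {α : ℝ} {x x' : X}

lemma IsProxPoint.le (h : IsProxPoint f α x x') (hα : 0 ≤ α) : f x' ≤ f x := by
  have h' := h x
  rw [dist_self, zero_pow two_ne_zero, mul_zero, EReal.coe_zero, add_zero] at h'
  exact (le_add_of_nonneg_right (EReal.coe_nonneg.2 (by positivity))).trans h'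

lemma IsProxPoint.slopeM_le (h : IsProxPoint f α x x') (hα : 0 < α) (hx' : f x' ≠ ⊤) :
    slopeM f x' ≤ ENNReal.ofReal (2 * α * dist x' x) := by
  refine ENNReal.le_of_forall_pos_le_add fun ε hε _ => ?_
  have h2αd : 0 ≤ 2 * α * dist x' x := by positivity
  rw [← ENNReal.ofReal_coe_nnreal, ← ENNReal.ofReal_add h2αd ε.coe_nonneg]
  refine slopeM_le_ofReal_s13 hx' (by positivity) ?_
  filter_upwards [ball_mem_nhds x' (div_pos (NNReal.coe_pos.2 hε) hα)] with z hz
  refine (EReal.le_add_coe_sub_of_add_coe_le (h z)).trans ?_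
  gcongr
  rw [mem_ball, lt_div_iff₀ hα] at hz
  have hsq : dist z x ^ 2 ≤ (dist z x' + dist x' x) ^ 2 :=
    pow_le_pow_left₀ dist_nonneg (dist_triangle z x' x) 2
  nlinarith [mul_le_mul_of_nonneg_left hsq hα.le,
    mul_le_mul_of_nonneg_left hz.le (dist_nonneg : 0 ≤ dist z x')]

lemma IsProxPoint.dist_le_infDist (h : IsProxPoint f α x x') (hα : 0 < α) {c : ℝ}
    (hx' : f x' = c) : dist x x' ≤ infDist x {z | f z ≤ c} := by
  refine (le_infDist ⟨x', hx'.le⟩).2 fun y (hy : f y ≤ c) => ?_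
  have h' := EReal.le_add_coe_sub_of_add_coe_le (h y)
  rw [hx'] at h'
  have h'' : (c : EReal) ≤ c + ((α * dist y x ^ 2 - α * dist x' x ^ 2 : ℝ) : EReal) :=
    h'.trans (by gcongr)
  rw [← EReal.coe_add, EReal.coe_le_coe_iff] at h''
  have hsq : dist x' x ^ 2 ≤ dist y x ^ 2 := le_of_mul_le_mul_left (by linarith) hα
  rw [dist_comm x, dist_comm x]
  exact (pow_le_pow_iff_left₀ dist_nonneg dist_nonneg two_ne_zero).1 hsq

end Proximal

lemma summable_of_le_sub {d u : ℕ → ℝ} (hd : ∀ k, 0 ≤ d k) (hu : ∀ k, 0 ≤ u k)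
    (h : ∀ k, d k ≤ u k - u (k + 1)) : Summable d :=
  summable_of_sum_range_le hd fun n => (Finset.sum_le_sum fun k _ => h k).trans <| by
    rw [Finset.sum_range_sub']
    linarith [hu n]

lemma dist_succ_le_of_isProxPoint_of_KL {X : Type*} [MetricSpace X] [CompleteSpace X]
    {f : X → EReal} {ρ : EReal} {φ : Desingularizer} {v α : ℝ} (hlsc : LowerSemicontinuous f)
    (hKL : ∀ z, (v : EReal) < f z → f z < ρ → 1 ≤ slopeM (klComp φ f v) z) (hα : 0 < α)
    {x : ℕ → X} (hprox : ∀ k, IsProxPoint f α (x k) (x (k + 1))) {a : ℕ → ℝ}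
    (ha : ∀ k, f (x k) = a k) (hρ : ∀ k, f (x k) < ρ) (hv : ∀ k, v < a k) (k : ℕ) :
    dist (x k) (x (k + 1)) ≤ φ.toFun (a k - v) - φ.toFun (a (k + 1) - v) := by
  have hle : a (k + 1) ≤ a k := by
    simpa only [ha, EReal.coe_le_coe_iff] using (hprox k).le hα.le
  exact ((hprox k).dist_le_infDist hα (ha (k + 1))).trans
    (infDist_sublevel_le_of_KL hlsc hKL (ha k) (hρ k) (hv (k + 1)) hle)

theorem summable_dist_of_isProxPoint_of_KL {X : Type*} [MetricSpace X] [CompleteSpace X]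
    {f : X → EReal} {ρ : EReal} {φ : Desingularizer} {v α : ℝ} (hlsc : LowerSemicontinuous f)
    (hbot : ∀ z, f z ≠ ⊥)
    (hKL : ∀ z, (v : EReal) < f z → f z < ρ → 1 ≤ slopeM (klComp φ f v) z)
    (hα : 0 < α) {x : ℕ → X} (hprox : ∀ k, IsProxPoint f α (x k) (x (k + 1)))
    (hρ : ∀ k, f (x k) < ρ) (hv : ∀ k, (v : EReal) < f (x k)) :
    Summable fun k => dist (x k) (x (k + 1)) := by
  set a : ℕ → ℝ := fun k => (f (x k)).toReal
  have ha : ∀ k, f (x k) = a k := fun k => (EReal.coe_toReal (hρ k).ne_top (hbot _)).symm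
  have hva : ∀ k, v < a k := fun k => EReal.coe_lt_coe_iff.1 (ha k ▸ hv k)
  exact summable_of_le_sub (fun _ => dist_nonneg) (fun k => φ.nonneg _ (by linarith [hva k]))
    (dist_succ_le_of_isProxPoint_of_KL hlsc hKL hα hprox ha hρ hva)

lemma exists_bound_of_bddAbove_slopeM {X : Type*} [MetricSpace X] {f : X → EReal} {y : ℕ → X}
    {A B : ℝ} {s : ℕ → ℝ} (hA : ∀ k, (A : EReal) ≤ f (y k)) (hB : ∀ k, f (y k) ≤ B)
    (hs : ∀ k, slopeM f (y k) ≤ ENNReal.ofReal (s k)) (hs_bdd : BddAbove (Set.range s)) :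
    ∃ C : ℝ, ∀ k, f (y k) ≤ (C : EReal) ∧ ((-C : ℝ) : EReal) ≤ f (y k) ∧
      slopeM f (y k) ≤ ENNReal.ofReal C := by
  obtain ⟨S, hS⟩ := hs_bdd
  refine ⟨max B (max (-A) S), fun k => ⟨(hB k).trans ?_, le_trans ?_ (hA k),
    (hs k).trans (ENNReal.ofReal_le_ofReal ((hS (Set.mem_range_self k)).trans ?_))⟩⟩
  · exact EReal.coe_le_coe_iff.2 (le_max_left _ _)
  · exact EReal.coe_le_coe_iff.2 (neg_le.1 ((le_max_left _ _).trans (le_max_right _ _)))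
  · exact (le_max_right _ _).trans (le_max_right _ _)

theorem proximal_sequence_converges_of_KL_general {X : Type*} [MetricSpace X] [CompleteSpace X]
    (f : X → EReal) (hlsc : LowerSemicontinuous f)
    (hbot : ∀ z, f z ≠ ⊥) (hbdd : ∃ c : ℝ, ∀ z, (c : EReal) ≤ f z)
    (hcont : ∀ (xk : ℕ → X) (xlim : X), Tendsto xk atTop (𝓝 xlim) →
      (∃ C : ℝ, ∀ k, f (xk k) ≤ (C : EReal) ∧ ((-C : ℝ) : EReal) ≤ f (xk k) ∧
        slopeM f (xk k) ≤ ENNReal.ofReal C) →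
      Tendsto (fun k => f (xk k)) atTop (𝓝 (f xlim)))
    (ρ : EReal) (φ : Desingularizer)
    (hKL : ∀ z : X, (⨅ w, f w) < f z → f z < ρ →
      (1 : ℝ≥0∞) ≤ slopeM (klComp φ f (⨅ w, f w)) z)
    (α : ℝ) (hα : 0 < α) (x : ℕ → X)
    (hprox : ∀ k, ∀ z : X, f (x (k+1)) + ((α * dist (x (k+1)) (x k) ^ 2 : ℝ) : EReal)
      ≤ f z + ((α * dist z (x k) ^ 2 : ℝ) : EReal))
    (hinit : f (x 0) < ρ) (hgt : ∀ k, (⨅ w, f w) < f (x k)) :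
    Summable (fun k => dist (x k) (x (k+1))) ∧
    ∃ xs : X, Tendsto x atTop (𝓝 xs) ∧ f xs ≠ ⊤ ∧
      Tendsto (fun k => f (x k)) atTop (𝓝 (f xs)) ∧
      Tendsto (fun k => slopeM f (x k)) atTop (𝓝 0) := by
  replace hprox : ∀ k, IsProxPoint f α (x k) (x (k + 1)) := hprox
  obtain ⟨c, hc⟩ := hbdd
  obtain ⟨v, hv⟩ : ∃ v : ℝ, (⨅ w, f w) = v := ⟨_, (EReal.coe_toReal (hgt 0).ne_top
    (ne_bot_of_le_ne_bot (EReal.coe_ne_bot c) (le_iInf hc))).symm⟩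
  rw [hv] at hKL hgt
  have hanti : Antitone (f ∘ x) := antitone_nat_of_succ_le fun k => (hprox k).le hα.le
  have hfρ : ∀ k, f (x k) < ρ := fun k => (hanti (Nat.zero_le k)).trans_lt hinit
  have hsum := summable_dist_of_isProxPoint_of_KL hlsc hbot hKL hα hprox hfρ hgt
  obtain ⟨xs, hxs⟩ := cauchySeq_tendsto_of_complete (cauchySeq_of_summable_dist hsum)
  have hd : Tendsto (fun k => 2 * α * dist (x (k + 1)) (x k)) atTop (𝓝 0) := by
    simpa only [dist_comm, mul_zero] using hsum.tendsto_atTop_zero.const_mul (2 * α)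
  have hslope : ∀ k, slopeM f (x (k + 1)) ≤ ENNReal.ofReal (2 * α * dist (x (k + 1)) (x k)) :=
    fun k => (hprox k).slopeM_le hα (hfρ _).ne_top
  have hfxs : Tendsto (fun k => f (x (k + 1))) atTop (𝓝 (f xs)) :=
    hcont _ xs (hxs.comp (tendsto_add_atTop_nat 1)) <| exists_bound_of_bddAbove_slopeM
      (fun k => (hgt _).le) (fun k => (hanti (Nat.zero_le (k + 1))).trans
        (EReal.le_coe_toReal (hfρ 0).ne_top)) hslope hd.bddAbove_range
  refine ⟨hsum, xs, hxs, ?_, (tendsto_add_atTop_iff_nat 1).1 hfxs,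
    (tendsto_add_atTop_iff_nat 1).1 ?_⟩
  · exact ((le_of_tendsto' hfxs fun k => hanti (Nat.zero_le _)).trans_lt hinit).ne_top
  · refine tendsto_of_tendsto_of_tendsto_of_le_of_le tendsto_const_nhds ?_ (fun _ => zero_le)
      hslope
    simpa using ENNReal.tendsto_ofReal hd

/-- Convergence of proximal sequences under a global KL property: the trajectory has finite
length, and the iterates converge to a critical point. -/
theorem proximal_sequence_converges_of_KL {X : Type*} [MetricSpace X] [CompleteSpace X]
    (f : X → EReal) (hproper : ∃ z, f z ≠ ⊤) (hlsc : LowerSemicontinuous f)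
    (hbot : ∀ z, f z ≠ ⊥) (hbdd : ∃ c : ℝ, ∀ z, (c : EReal) ≤ f z)
    (hcont : ∀ (xk : ℕ → X) (xlim : X), Tendsto xk atTop (𝓝 xlim) →
      (∃ C : ℝ, ∀ k, f (xk k) ≤ (C : EReal) ∧ ((-C : ℝ) : EReal) ≤ f (xk k) ∧
        slopeM f (xk k) ≤ ENNReal.ofReal C) →
      Tendsto (fun k => f (xk k)) atTop (𝓝 (f xlim)))
    (ρ : EReal) (hρ : (⨅ z, f z) < ρ) (φ : Desingularizer)
    (hKL : ∀ z : X, (⨅ w, f w) < f z → f z < ρ →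
      (1 : ℝ≥0∞) ≤ slopeM (klComp φ f (⨅ w, f w)) z)
    (α : ℝ) (hα : 0 < α) (x : ℕ → X)
    (hprox : ∀ k, ∀ z : X, f (x (k+1)) + ((α * dist (x (k+1)) (x k) ^ 2 : ℝ) : EReal)
      ≤ f z + ((α * dist z (x k) ^ 2 : ℝ) : EReal))
    (hinit : f (x 0) < ρ) (hgt : ∀ k, (⨅ w, f w) < f (x k)) :
    Summable (fun k => dist (x k) (x (k+1))) ∧
    ∃ xs : X, Tendsto x atTop (𝓝 xs) ∧ f xs ≠ ⊤ ∧
      Tendsto (fun k => f (x k)) atTop (𝓝 (f xs)) ∧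
      Tendsto (fun k => slopeM f (x k)) atTop (𝓝 0) :=
  proximal_sequence_converges_of_KL_general f hlsc hbot hbdd hcont ρ φ hKL α hα x hprox hinit hgt
end
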